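/- arXiv:1502.06002 — 5 statements merged into one kernel-verified Lean document; each statement's English description precedes it below -/
import Mathlib

section
/- Let p > 1 and let φ ∈ L^p(X,μ) be nonnegative with f = ∫_X φ dμ. Then ∫_X (Mφ)^p dμ ≤ −(1/(p−1)) f^p + (p/(p−1)) ∫_X φ · (Mφ)^{p−1} dμ. -/
open MeasureTheory Set

/-- The dyadic maximal function on `X = [0,1)` with Lebesgue measure:
`Mφ(x) = sup { μ(I)⁻¹ ∫_I |φ| dμ : I dyadic interval, x ∈ I }`. -/
noncomputable def dyadicMaximal (φ : ℝ → ℝ) (x : ℝ) : ℝ :=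
  ⨆ (n : ℕ) (k : ℕ) (_ : k < 2 ^ n)
    (_ : x ∈ Ico ((k : ℝ) / 2 ^ n) (((k : ℝ) + 1) / 2 ^ n)),
    (2 ^ n : ℝ) * ∫ y in Ico ((k : ℝ) / 2 ^ n) (((k : ℝ) + 1) / 2 ^ n), |φ y|

/-!
The proof is a Bellman-function induction along the dyadic tree. Let `M_m` be the maximal
function truncated at depth `m`, and let `B(t, a) = (p - 1) s ^ p - p a s ^ (p - 1)` with
`s = max t a` (this is `bellman p t a`). For a dyadic interval `J` with average `a_J` and any
`t ≥ 0` (standing for the largest average over the ancestors of `J`),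
  `(p - 1) ∫_J max(t, M_m) ^ p ≤ p ∫_J φ max(t, M_m) ^ (p - 1) + |J| B(t, a_J)`.
For `m = 0` this is an equality. In the inductive step `J` splits into halves with averages
`a₁ + a₂ = 2 a_J`, on which the hypothesis is applied with `s = max t a_J` in place of `t`.
Young's inequality `p b s ^ (p - 1) ≤ (p - 1) s ^ p + b ^ p` gives
`B(s, b) ≤ (p - 1) s ^ p - p b s ^ (p - 1)`, an affine function of `b` whose value at `a_J` is
`B(t, a_J)`. At the root, with `t = 0`, `B(0, f) = -f ^ p`. Finally `M_m ↑ M`: together with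
Hölder's inequality the same estimate bounds `∫ M_m ^ p` uniformly, so monotone convergence
passes to the limit with every integral finite.
-/

open scoped ENNReal

noncomputable section

def dyadicInterval (n k : ℕ) : Set ℝ := Ico ((k : ℝ) / 2 ^ n) (((k : ℝ) + 1) / 2 ^ n)

section DyadicInterval

variable {n k : ℕ} {x : ℝ}

lemma mem_dyadicInterval_iff : x ∈ dyadicInterval n k ↔ 0 ≤ x ∧ ⌊2 ^ n * x⌋₊ = k := by
  have h2 : (0 : ℝ) < 2 ^ n := by positivity
  simp only [dyadicInterval, mem_Ico, div_le_iff₀ h2, lt_div_iff₀ h2]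
  constructor
  · rintro ⟨hlo, hhi⟩
    have hx : 0 ≤ x := nonneg_of_mul_nonneg_left (le_trans k.cast_nonneg hlo) h2
    exact ⟨hx, (Nat.floor_eq_iff (by positivity)).2 ⟨by linarith, by linarith⟩⟩
  · rintro ⟨hx, rfl⟩
    rw [mul_comm x]
    exact ⟨Nat.floor_le (by positivity), Nat.lt_floor_add_one _⟩

lemma measurableSet_dyadicInterval : MeasurableSet (dyadicInterval n k) := measurableSet_Ico

lemma volume_real_dyadicInterval : volume.real (dyadicInterval n k) = (2 ^ n)⁻¹ := by
  have hlen : ((k : ℝ) + 1) / 2 ^ n - k / 2 ^ n = (2 ^ n)⁻¹ := by field_simp; ring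
  rw [measureReal_def, dyadicInterval, Real.volume_Ico, hlen, ENNReal.toReal_ofReal (by positivity)]

lemma dyadicInterval_zero_zero : dyadicInterval 0 0 = Ico 0 1 := by
  simp [dyadicInterval]

lemma floor_two_pow_mul_lt (hx : x ∈ Ico (0 : ℝ) 1) : ⌊2 ^ n * x⌋₊ < 2 ^ n := by
  rw [Nat.floor_lt (mul_nonneg (by positivity) hx.1)]
  push_cast
  nlinarith [hx.2, (by positivity : (0 : ℝ) < 2 ^ n)]

lemma dyadicInterval_subset_Ico (hk : k < 2 ^ n) : dyadicInterval n k ⊆ Ico 0 1 := by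
  intro x hx
  obtain ⟨hx0, hfloor⟩ := mem_dyadicInterval_iff.1 hx
  refine ⟨hx0, ?_⟩
  have : 2 ^ n * x < 2 ^ n := by
    simpa [hfloor] using (Nat.floor_lt (by positivity)).1 (hfloor ▸ hk :)
  nlinarith [(by positivity : (0 : ℝ) < 2 ^ n)]

lemma dyadicInterval_union_children :
    dyadicInterval (n + 1) (2 * k) ∪ dyadicInterval (n + 1) (2 * k + 1) = dyadicInterval n k := by
  ext x
  have hfloor : ⌊2 ^ n * x⌋₊ = ⌊2 ^ (n + 1) * x⌋₊ / 2 := by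
    rw [← Nat.floor_div_ofNat]
    ring_nf
  simp only [mem_union, mem_dyadicInterval_iff]
  by_cases hx : 0 ≤ x
  · simp only [hx, true_and]
    omega
  · simp [hx]

lemma disjoint_dyadicInterval_children :
    Disjoint (dyadicInterval (n + 1) (2 * k)) (dyadicInterval (n + 1) (2 * k + 1)) :=
  disjoint_left.2 fun x h₁ h₂ => by
    rw [mem_dyadicInterval_iff] at h₁ h₂
    omega

end DyadicInterval

def dyadicAverage (φ : ℝ → ℝ) (n k : ℕ) : ℝ := 2 ^ n * ∫ y in dyadicInterval n k, |φ y|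

def dyadicAverageAt (φ : ℝ → ℝ) (n : ℕ) (x : ℝ) : ℝ := dyadicAverage φ n ⌊2 ^ n * x⌋₊

def truncatedMaximal (φ : ℝ → ℝ) : ℕ → ℕ → ℝ → ℝ
  | n, 0, x => dyadicAverageAt φ n x
  | n, m + 1, x => max (dyadicAverageAt φ n x) (truncatedMaximal φ (n + 1) m x)

/-- Unlike the real supremum in `dyadicMaximal`, which is `0` where the averages are unbounded,
this supremum records such points as `∞`. -/
def eDyadicMaximal (φ : ℝ → ℝ) (x : ℝ) : ℝ≥0∞ := ⨆ n, ENNReal.ofReal (dyadicAverageAt φ n x)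

section DyadicAverage

variable {φ : ℝ → ℝ} {n k m : ℕ} {x : ℝ}

lemma dyadicAverage_nonneg (φ : ℝ → ℝ) (n k : ℕ) : 0 ≤ dyadicAverage φ n k :=
  mul_nonneg (by positivity) (integral_nonneg fun _ => abs_nonneg _)

lemma dyadicAverage_of_nonneg (hφ : ∀ x, 0 ≤ φ x) (n k : ℕ) :
    dyadicAverage φ n k = 2 ^ n * ∫ y in dyadicInterval n k, φ y := by
  simp only [dyadicAverage, abs_of_nonneg (hφ _)]

lemma dyadicAverage_zero_zero (hφ : ∀ x, 0 ≤ φ x) :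
    dyadicAverage φ 0 0 = ∫ x in Ico (0 : ℝ) 1, φ x := by
  rw [dyadicAverage_of_nonneg hφ, dyadicInterval_zero_zero, pow_zero, one_mul]

lemma dyadicAverage_children (hφ : IntegrableOn φ (Ico 0 1)) (hk : k < 2 ^ n) :
    dyadicAverage φ (n + 1) (2 * k) + dyadicAverage φ (n + 1) (2 * k + 1) =
      2 * dyadicAverage φ n k := by
  have hint : ∀ {c}, c < 2 ^ (n + 1) → IntegrableOn (fun y => |φ y|) (dyadicInterval (n + 1) c) :=
    fun hc => (hφ.mono_set (dyadicInterval_subset_Ico hc)).abs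
  simp only [dyadicAverage]
  rw [← dyadicInterval_union_children (k := k), setIntegral_union disjoint_dyadicInterval_children
    measurableSet_dyadicInterval (hint (by rw [pow_succ]; omega)) (hint (by rw [pow_succ]; omega))]
  ring

lemma dyadicAverageAt_of_mem (hx : x ∈ dyadicInterval n k) :
    dyadicAverageAt φ n x = dyadicAverage φ n k := by
  rw [dyadicAverageAt, (mem_dyadicInterval_iff.1 hx).2]

lemma measurable_dyadicAverageAt (φ : ℝ → ℝ) (n : ℕ) : Measurable (dyadicAverageAt φ n) :=
  measurable_from_nat.comp (Nat.measurable_floor.comp (measurable_id.const_mul _))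

lemma dyadicAverageAt_le_truncatedMaximal (φ : ℝ → ℝ) (n m : ℕ) (x : ℝ) :
    dyadicAverageAt φ n x ≤ truncatedMaximal φ n m x := by
  cases m with
  | zero => exact le_rfl
  | succ m => exact le_max_left _ _

lemma dyadicAverageAt_add_le_truncatedMaximal (φ : ℝ → ℝ) (n m : ℕ) (x : ℝ) :
    dyadicAverageAt φ (n + m) x ≤ truncatedMaximal φ n m x := by
  induction m generalizing n with
  | zero => exact le_rfl
  | succ m ih => exact (add_right_comm n m 1 ▸ ih (n + 1)).trans (le_max_right _ _)

lemma truncatedMaximal_nonneg (φ : ℝ → ℝ) (n m : ℕ) (x : ℝ) : 0 ≤ truncatedMaximal φ n m x :=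
  (dyadicAverage_nonneg _ _ _).trans (dyadicAverageAt_le_truncatedMaximal φ n m x)

lemma truncatedMaximal_le_succ (φ : ℝ → ℝ) (n m : ℕ) (x : ℝ) :
    truncatedMaximal φ n m x ≤ truncatedMaximal φ n (m + 1) x := by
  induction m generalizing n with
  | zero => exact le_max_left _ _
  | succ m ih => exact max_le_max le_rfl (ih (n + 1))

lemma monotone_truncatedMaximal (φ : ℝ → ℝ) (n : ℕ) :
    Monotone fun m x => truncatedMaximal φ n m x :=
  monotone_nat_of_le_succ fun m x => truncatedMaximal_le_succ φ n m x

lemma measurable_truncatedMaximal (φ : ℝ → ℝ) (n m : ℕ) :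
    Measurable (truncatedMaximal φ n m) := by
  induction m generalizing n with
  | zero => exact measurable_dyadicAverageAt φ n
  | succ m ih => exact (measurable_dyadicAverageAt φ n).max (ih (n + 1))

lemma bddAbove_dyadicAverageAt (φ : ℝ → ℝ) (n : ℕ) :
    BddAbove (dyadicAverageAt φ n '' Ico 0 1) := by
  refine ⟨∑ k ∈ Finset.range (2 ^ n), dyadicAverage φ n k, ?_⟩
  rintro _ ⟨x, hx, rfl⟩
  exact Finset.single_le_sum (fun k _ => dyadicAverage_nonneg φ n k)
    (Finset.mem_range.2 (floor_two_pow_mul_lt hx))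

lemma bddAbove_truncatedMaximal (φ : ℝ → ℝ) (n m : ℕ) :
    BddAbove (truncatedMaximal φ n m '' Ico 0 1) := by
  induction m generalizing n with
  | zero => exact bddAbove_dyadicAverageAt φ n
  | succ m ih =>
    obtain ⟨C, hC⟩ := bddAbove_dyadicAverageAt φ n
    obtain ⟨D, hD⟩ := ih (n + 1)
    refine ⟨max C D, ?_⟩
    rintro _ ⟨x, hx, rfl⟩
    exact max_le_max (hC ⟨x, hx, rfl⟩) (hD ⟨x, hx, rfl⟩)

lemma truncatedMaximal_succ_of_mem (hx : x ∈ dyadicInterval n k) :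
    truncatedMaximal φ n (m + 1) x =
      max (dyadicAverage φ n k) (truncatedMaximal φ (n + 1) m x) := by
  rw [truncatedMaximal, dyadicAverageAt_of_mem hx]

lemma ofReal_truncatedMaximal_le_eDyadicMaximal (φ : ℝ → ℝ) (n m : ℕ) (x : ℝ) :
    ENNReal.ofReal (truncatedMaximal φ n m x) ≤ eDyadicMaximal φ x := by
  induction m generalizing n with
  | zero => exact le_iSup (fun j => ENNReal.ofReal (dyadicAverageAt φ j x)) n
  | succ m ih =>
    rw [truncatedMaximal, ENNReal.ofReal_max]
    exact max_le (le_iSup (fun j => ENNReal.ofReal (dyadicAverageAt φ j x)) n) (ih (n + 1))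

lemma eDyadicMaximal_eq_iSup_truncatedMaximal (φ : ℝ → ℝ) (x : ℝ) :
    eDyadicMaximal φ x = ⨆ m, ENNReal.ofReal (truncatedMaximal φ 0 m x) := by
  refine le_antisymm (iSup_le fun n => ?_)
    (iSup_le fun m => ofReal_truncatedMaximal_le_eDyadicMaximal φ 0 m x)
  have hn := dyadicAverageAt_add_le_truncatedMaximal φ 0 n x
  rw [zero_add] at hn
  exact (ENNReal.ofReal_le_ofReal hn).trans
    (le_iSup (fun m => ENNReal.ofReal (truncatedMaximal φ 0 m x)) n)

end DyadicAverage

section DyadicMaximal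

variable {φ : ℝ → ℝ} {x : ℝ}

lemma dyadicMaximal_eq_iSup (hx : x ∈ Ico (0 : ℝ) 1) :
    dyadicMaximal φ x = ⨆ n, dyadicAverageAt φ n x := by
  refine iSup_congr fun n => ?_
  have hterm : ∀ k, (⨆ (_ : k < 2 ^ n) (_ : x ∈ dyadicInterval n k), dyadicAverage φ n k) =
      if k = ⌊2 ^ n * x⌋₊ then dyadicAverageAt φ n x else 0 := by
    intro k
    simp only [mem_dyadicInterval_iff, hx.1, true_and]
    split_ifs with hk
    · subst hk
      rw [ciSup_pos (floor_two_pow_mul_lt hx), ciSup_pos rfl, dyadicAverageAt]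
    · simp [ciSup_neg, Ne.symm hk]
  change (⨆ k, ⨆ (_ : k < 2 ^ n) (_ : x ∈ dyadicInterval n k), dyadicAverage φ n k) = _
  simp only [hterm]
  refine ciSup_eq_of_forall_le_of_forall_lt_exists_gt (fun k => ?_)
    fun w hw => ⟨⌊2 ^ n * x⌋₊, by simpa⟩
  split_ifs
  · exact le_rfl
  · exact dyadicAverage_nonneg _ _ _

lemma dyadicMaximal_eq_toReal (hx : x ∈ Ico (0 : ℝ) 1) :
    dyadicMaximal φ x = (eDyadicMaximal φ x).toReal := by
  rw [eDyadicMaximal, ENNReal.toReal_iSup fun _ => ENNReal.ofReal_ne_top, dyadicMaximal_eq_iSup hx]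
  simp only [ENNReal.toReal_ofReal (dyadicAverage_nonneg _ _ _), dyadicAverageAt]

lemma measurable_eDyadicMaximal (φ : ℝ → ℝ) : Measurable (eDyadicMaximal φ) :=
  Measurable.iSup fun n => (measurable_dyadicAverageAt φ n).ennreal_ofReal

end DyadicMaximal

section Bellman

variable {p : ℝ}

lemma Real.rpow_sub_one_mul_self {a : ℝ} (ha : 0 ≤ a) (hp : p ≠ 0) : a ^ (p - 1) * a = a ^ p := by
  conv_rhs => rw [← sub_add_cancel p 1, Real.rpow_add' ha (by simpa using hp), Real.rpow_one]

lemma mul_mul_rpow_sub_one_le (hp : 1 < p) {a s : ℝ} (ha : 0 ≤ a) (hs : 0 ≤ s) :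
    p * a * s ^ (p - 1) ≤ (p - 1) * s ^ p + a ^ p := by
  have hpq : p.HolderConjugate (p / (p - 1)) := .conjExponent hp
  have hyoung := Real.young_inequality_of_nonneg ha (Real.rpow_nonneg hs (p - 1)) hpq
  rw [← Real.rpow_mul hs, mul_div_cancel₀ p (by linarith : p - 1 ≠ 0)] at hyoung
  have hp0 : 0 < p := by linarith
  calc p * a * s ^ (p - 1) = p * (a * s ^ (p - 1)) := by ring
    _ ≤ p * (a ^ p / p + s ^ p / (p / (p - 1))) := by gcongr
    _ = (p - 1) * s ^ p + a ^ p := by field_simp; ring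

def bellman (p t a : ℝ) : ℝ := (p - 1) * max t a ^ p - p * a * max t a ^ (p - 1)

lemma bellman_zero_left (hp : 1 < p) {a : ℝ} (ha : 0 ≤ a) : bellman p 0 a = -a ^ p := by
  have hpow := Real.rpow_sub_one_mul_self ha (by linarith : p ≠ 0)
  rw [bellman, max_eq_right ha]
  linear_combination -p * hpow

lemma bellman_le (hp : 1 < p) {s b : ℝ} (hs : 0 ≤ s) (hb : 0 ≤ b) :
    bellman p s b ≤ (p - 1) * s ^ p - p * b * s ^ (p - 1) := by
  rcases le_total s b with hsb | hbs
  · have hpow := Real.rpow_sub_one_mul_self hb (by linarith : p ≠ 0)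
    have hyoung := mul_mul_rpow_sub_one_le hp hb hs
    rw [bellman, max_eq_right hsb]
    linear_combination hyoung - p * hpow
  · rw [bellman, max_eq_left hbs]

lemma bellman_children (hp : 1 < p) {t a a₁ a₂ : ℝ} (ht : 0 ≤ t) (ha₁ : 0 ≤ a₁) (ha₂ : 0 ≤ a₂)
    (hsum : a₁ + a₂ = 2 * a) :
    bellman p (max t a) a₁ + bellman p (max t a) a₂ ≤ 2 * bellman p t a := by
  have hs : 0 ≤ max t a := le_max_of_le_left ht
  have h₁ := bellman_le hp hs ha₁
  have h₂ := bellman_le hp hs ha₂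
  have hdef : bellman p t a = (p - 1) * max t a ^ p - p * a * max t a ^ (p - 1) := rfl
  rw [hdef]
  linear_combination h₁ + h₂ - p * max t a ^ (p - 1) * hsum

end Bellman

section Integrability

variable {α : Type*} [MeasurableSpace α] {μ : Measure α} {s : Set α} {u : α → ℝ} {q : ℝ}

lemma integrableOn_rpow_of_bddAbove (hs : μ s ≠ ∞) (hsm : MeasurableSet s) (hu : Measurable u)
    (hu0 : ∀ x, 0 ≤ u x) (hbdd : BddAbove (u '' s)) (hq : 0 ≤ q) :
    IntegrableOn (fun x => u x ^ q) s μ := by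
  obtain ⟨C, hC⟩ := hbdd
  refine Measure.integrableOn_of_bounded (M := C ^ q) hs (hu.pow_const q).aestronglyMeasurable
    ((ae_restrict_iff' hsm).2 (Filter.Eventually.of_forall fun x hx => ?_))
  rw [Real.norm_of_nonneg (Real.rpow_nonneg (hu0 x) q)]
  exact Real.rpow_le_rpow (hu0 x) (hC ⟨x, hx, rfl⟩) hq

lemma IntegrableOn.mul_rpow_of_bddAbove {φ : α → ℝ} (hφ : IntegrableOn φ s μ)
    (hsm : MeasurableSet s) (hu : Measurable u) (hu0 : ∀ x, 0 ≤ u x) (hbdd : BddAbove (u '' s))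
    (hq : 0 ≤ q) : IntegrableOn (fun x => φ x * u x ^ q) s μ := by
  obtain ⟨C, hC⟩ := hbdd
  refine hφ.mul_bdd (c := C ^ q) (hu.pow_const q).aestronglyMeasurable
    ((ae_restrict_iff' hsm).2 (Filter.Eventually.of_forall fun x hx => ?_))
  rw [Real.norm_of_nonneg (Real.rpow_nonneg (hu0 x) q)]
  exact Real.rpow_le_rpow (hu0 x) (hC ⟨x, hx, rfl⟩) hq

end Integrability

section BellmanInduction

variable {φ : ℝ → ℝ} {p : ℝ} {n k : ℕ}

lemma setIntegral_dyadicInterval_eq_add {g : ℝ → ℝ} (hg : IntegrableOn g (dyadicInterval n k)) :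
    ∫ x in dyadicInterval n k, g x = (∫ x in dyadicInterval (n + 1) (2 * k), g x) +
      ∫ x in dyadicInterval (n + 1) (2 * k + 1), g x := by
  rw [← dyadicInterval_union_children] at hg ⊢
  exact setIntegral_union disjoint_dyadicInterval_children measurableSet_dyadicInterval
    (hg.mono_set subset_union_left) (hg.mono_set subset_union_right)

lemma bddAbove_max_truncatedMaximal (φ : ℝ → ℝ) (n m : ℕ) (t : ℝ) {s : Set ℝ}
    (hs : s ⊆ Ico 0 1) : BddAbove ((fun x => max t (truncatedMaximal φ n m x)) '' s) := by
  rw [← image_image (max t)]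
  exact (monotone_const.max monotone_id).map_bddAbove
    ((bddAbove_truncatedMaximal φ n m).mono (image_mono hs))

lemma bellman_inequality (hp : 1 < p) (hφ : ∀ x, 0 ≤ φ x) (hint : IntegrableOn φ (Ico 0 1))
    (m : ℕ) (hk : k < 2 ^ n) {t : ℝ} (ht : 0 ≤ t) :
    (p - 1) * ∫ x in dyadicInterval n k, max t (truncatedMaximal φ n m x) ^ p ≤
      p * (∫ x in dyadicInterval n k, φ x * max t (truncatedMaximal φ n m x) ^ (p - 1)) +
        bellman p t (dyadicAverage φ n k) / 2 ^ n := by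
  induction m generalizing n k t with
  | zero =>
    set a := dyadicAverage φ n k
    have hconst : ∀ x ∈ dyadicInterval n k, truncatedMaximal φ n 0 x = a :=
      fun x hx => dyadicAverageAt_of_mem hx
    have hlhs : ∫ x in dyadicInterval n k, max t (truncatedMaximal φ n 0 x) ^ p =
        ∫ x in dyadicInterval n k, max t a ^ p :=
      setIntegral_congr_fun measurableSet_dyadicInterval fun x hx => by simp only [hconst x hx]
    have hrhs : ∫ x in dyadicInterval n k, φ x * max t (truncatedMaximal φ n 0 x) ^ (p - 1) =
        ∫ x in dyadicInterval n k, φ x * max t a ^ (p - 1) :=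
      setIntegral_congr_fun measurableSet_dyadicInterval fun x hx => by simp only [hconst x hx]
    have hφJ : ∫ x in dyadicInterval n k, φ x = a / 2 ^ n := by
      rw [show a = _ from dyadicAverage_of_nonneg hφ n k]; field_simp
    rw [hlhs, hrhs, setIntegral_const, integral_mul_const, hφJ, volume_real_dyadicInterval,
      smul_eq_mul, bellman]
    apply le_of_eq
    field_simp
    ring
  | succ m ih =>
    set a := dyadicAverage φ n k
    set t' := max t a
    have hJ : dyadicInterval n k ⊆ Ico 0 1 := dyadicInterval_subset_Ico hk
    have hchild : ∀ c, c < 2 ^ (n + 1) → dyadicInterval (n + 1) c ⊆ dyadicInterval n k →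
        (p - 1) * ∫ x in dyadicInterval (n + 1) c, max t (truncatedMaximal φ n (m + 1) x) ^ p ≤
          p * (∫ x in dyadicInterval (n + 1) c,
            φ x * max t (truncatedMaximal φ n (m + 1) x) ^ (p - 1)) +
            bellman p t' (dyadicAverage φ (n + 1) c) / 2 ^ (n + 1) := by
      intro c hc hsub
      have heq : ∀ x ∈ dyadicInterval (n + 1) c,
          max t (truncatedMaximal φ n (m + 1) x) = max t' (truncatedMaximal φ (n + 1) m x) :=
        fun x hx => by rw [truncatedMaximal_succ_of_mem (hsub hx), max_assoc]
      have hlhs : ∫ x in dyadicInterval (n + 1) c, max t (truncatedMaximal φ n (m + 1) x) ^ p =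
          ∫ x in dyadicInterval (n + 1) c, max t' (truncatedMaximal φ (n + 1) m x) ^ p :=
        setIntegral_congr_fun measurableSet_dyadicInterval fun x hx => by simp only [heq x hx]
      have hrhs : ∫ x in dyadicInterval (n + 1) c,
            φ x * max t (truncatedMaximal φ n (m + 1) x) ^ (p - 1) =
          ∫ x in dyadicInterval (n + 1) c,
            φ x * max t' (truncatedMaximal φ (n + 1) m x) ^ (p - 1) :=
        setIntegral_congr_fun measurableSet_dyadicInterval fun x hx => by simp only [heq x hx]
      rw [hlhs, hrhs]
      exact ih hc (le_max_of_le_left ht)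
    have hu : Measurable fun x => max t (truncatedMaximal φ n (m + 1) x) :=
      measurable_const.max (measurable_truncatedMaximal φ n (m + 1))
    have hu0 : ∀ x, 0 ≤ max t (truncatedMaximal φ n (m + 1) x) := fun _ => le_max_of_le_left ht
    have hbdd := bddAbove_max_truncatedMaximal φ n (m + 1) t hJ
    rw [setIntegral_dyadicInterval_eq_add (integrableOn_rpow_of_bddAbove measure_Ico_lt_top.ne
        measurableSet_dyadicInterval hu hu0 hbdd (by linarith)),
      setIntegral_dyadicInterval_eq_add (IntegrableOn.mul_rpow_of_bddAbove
        (hint.mono_set hJ) measurableSet_dyadicInterval hu hu0 hbdd (by linarith))]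
    have hleft := hchild (2 * k) (by rw [pow_succ]; omega)
      (dyadicInterval_union_children (n := n) (k := k) ▸ subset_union_left)
    have hright := hchild (2 * k + 1) (by rw [pow_succ]; omega)
      (dyadicInterval_union_children (n := n) (k := k) ▸ subset_union_right)
    have hbellman : bellman p t' (dyadicAverage φ (n + 1) (2 * k)) / 2 ^ (n + 1) +
        bellman p t' (dyadicAverage φ (n + 1) (2 * k + 1)) / 2 ^ (n + 1) ≤
          bellman p t a / 2 ^ n := by
      have hsum := bellman_children hp ht (dyadicAverage_nonneg φ (n + 1) (2 * k))
        (dyadicAverage_nonneg φ (n + 1) (2 * k + 1)) (dyadicAverage_children hint hk)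
      rw [← add_div, pow_succ, div_le_div_iff₀ (by positivity) (by positivity)]
      nlinarith [(by positivity : (0 : ℝ) < 2 ^ n)]
    linarith

end BellmanInduction

section Limit

variable {α : Type*} [MeasurableSpace α] {μ : Measure α} {p : ℝ}

lemma ENNReal.le_rpow_of_mul_le_mul_rpow (hp : 1 < p) {X D : ℝ≥0∞} (hX : X ≠ ∞)
    (h : ENNReal.ofReal (p - 1) * X ≤ D * X ^ ((p - 1) / p)) :
    X ≤ (D / ENNReal.ofReal (p - 1)) ^ p := by
  have hp0 : 0 < p := by linarith
  rcases eq_or_ne X 0 with rfl | hX0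
  · exact zero_le
  have hsplit : X ^ ((p - 1) / p) * X ^ (1 / p) = X := by
    rw [← ENNReal.rpow_add _ _ hX0 hX, ← add_div, sub_add_cancel, div_self hp0.ne',
      ENNReal.rpow_one]
  have hcancel : ENNReal.ofReal (p - 1) * X ^ (1 / p) ≤ D := by
    have hY0 : X ^ ((p - 1) / p) ≠ 0 := by simp [ENNReal.rpow_eq_zero_iff, hX0, hX]
    have hYtop : X ^ ((p - 1) / p) ≠ ∞ := by simp [ENNReal.rpow_eq_top_iff, hX0, hX]
    refine (ENNReal.mul_le_mul_iff_left hY0 hYtop).1 ?_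
    calc ENNReal.ofReal (p - 1) * X ^ (1 / p) * X ^ ((p - 1) / p)
        = ENNReal.ofReal (p - 1) * X := by rw [mul_assoc, mul_comm (X ^ _), hsplit]
      _ ≤ D * X ^ ((p - 1) / p) := h
  have hroot : X ^ (1 / p) ≤ D / ENNReal.ofReal (p - 1) := by
    rw [ENNReal.le_div_iff_mul_le (Or.inl (by simpa using hp)) (Or.inl ENNReal.ofReal_ne_top),
      mul_comm]
    exact hcancel
  calc X = (X ^ (1 / p)) ^ p := by
        rw [← ENNReal.rpow_mul, one_div_mul_cancel hp0.ne', ENNReal.rpow_one]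
    _ ≤ (D / ENNReal.ofReal (p - 1)) ^ p := ENNReal.rpow_le_rpow hroot hp0.le

lemma lintegral_mul_rpow_sub_one_le (hp : 1 < p) {h g : α → ℝ≥0∞} (hh : AEMeasurable h μ)
    (hg : AEMeasurable g μ) :
    ∫⁻ x, h x * g x ^ (p - 1) ∂μ ≤
      (∫⁻ x, h x ^ p ∂μ) ^ (1 / p) * (∫⁻ x, g x ^ p ∂μ) ^ ((p - 1) / p) := by
  have hpq : p.HolderConjugate (p / (p - 1)) := .conjExponent hp
  have hexp : (p - 1) * (p / (p - 1)) = p := mul_div_cancel₀ p (by linarith)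
  calc ∫⁻ x, h x * g x ^ (p - 1) ∂μ
      ≤ (∫⁻ x, h x ^ p ∂μ) ^ (1 / p) *
          (∫⁻ x, (g x ^ (p - 1)) ^ (p / (p - 1)) ∂μ) ^ (1 / (p / (p - 1))) :=
        ENNReal.lintegral_mul_le_Lp_mul_Lq μ hpq hh (hg.pow_const _)
    _ = _ := by simp_rw [← ENNReal.rpow_mul, hexp, one_div_div]

lemma lintegral_iSup_rpow_inequality (hp : 1 < p) {h : α → ℝ≥0∞} (hh : AEMeasurable h μ)
    (hh_fin : ∫⁻ x, h x ^ p ∂μ ≠ ∞) {g : ℕ → α → ℝ≥0∞} (hg : ∀ m, Measurable (g m))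
    (hmono : Monotone g) (hg_fin : ∀ m, ∫⁻ x, g m x ^ p ∂μ ≠ ∞) {c : ℝ≥0∞}
    (hineq : ∀ m, ENNReal.ofReal (p - 1) * ∫⁻ x, g m x ^ p ∂μ + c ≤
      ENNReal.ofReal p * ∫⁻ x, h x * g m x ^ (p - 1) ∂μ) :
    ∫⁻ x, (⨆ m, g m x) ^ p ∂μ ≠ ∞ ∧ ∫⁻ x, h x * (⨆ m, g m x) ^ (p - 1) ∂μ ≠ ∞ ∧
      ENNReal.ofReal (p - 1) * ∫⁻ x, (⨆ m, g m x) ^ p ∂μ + c ≤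
        ENNReal.ofReal p * ∫⁻ x, h x * (⨆ m, g m x) ^ (p - 1) ∂μ := by
  have hp0 : 0 < p := by linarith
  have hmct : ∫⁻ x, (⨆ m, g m x) ^ p ∂μ = ⨆ m, ∫⁻ x, g m x ^ p ∂μ := by
    simp_rw [← ENNReal.orderIsoRpow_apply p hp0, OrderIso.map_iSup, ENNReal.orderIsoRpow_apply]
    exact lintegral_iSup (fun m => (hg m).pow_const p)
      fun i j hij x => ENNReal.rpow_le_rpow (hmono hij x) hp0.le
  set D := ENNReal.ofReal p * (∫⁻ x, h x ^ p ∂μ) ^ (1 / p)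
  have hbound : ∀ m, ∫⁻ x, g m x ^ p ∂μ ≤ (D / ENNReal.ofReal (p - 1)) ^ p := by
    intro m
    refine ENNReal.le_rpow_of_mul_le_mul_rpow hp (hg_fin m) ?_
    calc ENNReal.ofReal (p - 1) * ∫⁻ x, g m x ^ p ∂μ
        ≤ ENNReal.ofReal p * ∫⁻ x, h x * g m x ^ (p - 1) ∂μ := le_self_add.trans (hineq m)
      _ ≤ ENNReal.ofReal p *
          ((∫⁻ x, h x ^ p ∂μ) ^ (1 / p) * (∫⁻ x, g m x ^ p ∂μ) ^ ((p - 1) / p)) := by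
        gcongr
        exact lintegral_mul_rpow_sub_one_le hp hh (hg m).aemeasurable
      _ = D * (∫⁻ x, g m x ^ p ∂μ) ^ ((p - 1) / p) := by rw [mul_assoc]
  have hA : (∫⁻ x, h x ^ p ∂μ) ^ (1 / p) ≠ ∞ := ENNReal.rpow_ne_top_of_nonneg (by positivity) hh_fin
  have hX : ∫⁻ x, (⨆ m, g m x) ^ p ∂μ ≠ ∞ := hmct ▸ ne_top_of_le_ne_top
    (ENNReal.rpow_ne_top_of_nonneg hp0.le (ENNReal.div_ne_top
      (ENNReal.mul_ne_top ENNReal.ofReal_ne_top hA) (by simpa using hp))) (iSup_le hbound)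
  refine ⟨hX, ne_top_of_le_ne_top (ENNReal.mul_ne_top hA (ENNReal.rpow_ne_top_of_nonneg
    (div_nonneg (by linarith) hp0.le) hX))
    (lintegral_mul_rpow_sub_one_le hp hh (Measurable.iSup hg).aemeasurable), ?_⟩
  · rw [hmct, ENNReal.mul_iSup, ENNReal.iSup_add]
    refine iSup_le fun m => (hineq m).trans ?_
    gcongr with x
    exact le_iSup (fun m => g m x) m

end Limit

section Conversion

variable {α : Type*} [MeasurableSpace α] {μ : Measure α} {u : α → ℝ≥0∞} {q : ℝ}

lemma integral_toReal_rpow (hu : AEMeasurable u μ) (hfin : ∀ᵐ x ∂μ, u x ≠ ∞) (hq : 0 ≤ q) :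
    ∫ x, (u x).toReal ^ q ∂μ = (∫⁻ x, u x ^ q ∂μ).toReal := by
  rw [← integral_toReal (hu.pow_const q)
    (hfin.mono fun x hx => (ENNReal.rpow_ne_top_of_nonneg hq hx).lt_top)]
  simp only [ENNReal.toReal_rpow]

lemma integral_mul_toReal_rpow {w : α → ℝ} (hw : AEMeasurable w μ) (hw0 : ∀ x, 0 ≤ w x)
    (hu : AEMeasurable u μ) (hfin : ∀ᵐ x ∂μ, u x ≠ ∞) (hq : 0 ≤ q) :
    ∫ x, w x * (u x).toReal ^ q ∂μ = (∫⁻ x, ENNReal.ofReal (w x) * u x ^ q ∂μ).toReal := by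
  rw [← integral_toReal (f := fun x => ENNReal.ofReal (w x) * u x ^ q)
    (hw.ennreal_ofReal.mul (hu.pow_const q)) (hfin.mono fun x hx =>
    ENNReal.mul_lt_top ENNReal.ofReal_lt_top (ENNReal.rpow_ne_top_of_nonneg hq hx).lt_top)]
  simp only [ENNReal.toReal_mul, ENNReal.toReal_ofReal (hw0 _), ENNReal.toReal_rpow]

lemma toReal_le_of_ofReal_mul_add_le {p : ℝ} (hp : 1 < p) {X R : ℝ≥0∞} (hR : R ≠ ∞) {c : ℝ}
    (hc : 0 ≤ c) (h : ENNReal.ofReal (p - 1) * X + ENNReal.ofReal c ≤ ENNReal.ofReal p * R) :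
    X.toReal ≤ -(1 / (p - 1)) * c + p / (p - 1) * R.toReal := by
  have hp1 : 0 < p - 1 := by linarith
  have hpR : ENNReal.ofReal p * R ≠ ∞ := ENNReal.mul_ne_top ENNReal.ofReal_ne_top hR
  have hX : X ≠ ∞ := by
    rintro rfl
    simp [ENNReal.mul_top (by simpa using hp1 : ENNReal.ofReal (p - 1) ≠ 0)] at h
    exact hpR h
  have hreal := ENNReal.toReal_mono hpR h
  rw [ENNReal.toReal_add (ENNReal.mul_ne_top ENNReal.ofReal_ne_top hX) ENNReal.ofReal_ne_top,
    ENNReal.toReal_mul, ENNReal.toReal_mul, ENNReal.toReal_ofReal hp1.le,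
    ENNReal.toReal_ofReal (by linarith : 0 ≤ p), ENNReal.toReal_ofReal hc] at hreal
  have hrhs : -(1 / (p - 1)) * c + p / (p - 1) * R.toReal = (p * R.toReal - c) / (p - 1) := by
    field_simp
    ring
  rw [hrhs, le_div_iff₀ hp1]
  linarith

end Conversion

section MainInequality

variable {φ : ℝ → ℝ} {p : ℝ}

lemma truncatedMaximal_inequality (hp : 1 < p) (hφ : ∀ x, 0 ≤ φ x)
    (hint : IntegrableOn φ (Ico 0 1)) (m : ℕ) :
    (p - 1) * (∫ x in Ico (0 : ℝ) 1, truncatedMaximal φ 0 m x ^ p) +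
        (∫ x in Ico (0 : ℝ) 1, φ x) ^ p ≤
      p * ∫ x in Ico (0 : ℝ) 1, φ x * truncatedMaximal φ 0 m x ^ (p - 1) := by
  have h := bellman_inequality hp hφ hint m (n := 0) (k := 0) one_pos le_rfl
  have hmax : ∀ x, max 0 (truncatedMaximal φ 0 m x) = truncatedMaximal φ 0 m x :=
    fun x => max_eq_right (truncatedMaximal_nonneg φ 0 m x)
  rw [bellman_zero_left hp (dyadicAverage_nonneg φ 0 0), dyadicAverage_zero_zero hφ] at h
  simp only [hmax, dyadicInterval_zero_zero, pow_zero, div_one] at h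
  linarith

lemma lintegral_truncatedMaximal_inequality (hp : 1 < p) (hφ : ∀ x, 0 ≤ φ x)
    (hint : IntegrableOn φ (Ico 0 1)) (m : ℕ) :
    ∫⁻ x in Ico (0 : ℝ) 1, ENNReal.ofReal (truncatedMaximal φ 0 m x) ^ p ≠ ∞ ∧
      ENNReal.ofReal (p - 1) *
            (∫⁻ x in Ico (0 : ℝ) 1, ENNReal.ofReal (truncatedMaximal φ 0 m x) ^ p) +
          ENNReal.ofReal ((∫ x in Ico (0 : ℝ) 1, φ x) ^ p) ≤
        ENNReal.ofReal p * ∫⁻ x in Ico (0 : ℝ) 1,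
          ENNReal.ofReal (φ x) * ENNReal.ofReal (truncatedMaximal φ 0 m x) ^ (p - 1) := by
  have hu := measurable_truncatedMaximal φ 0 m
  have hu0 := truncatedMaximal_nonneg φ 0 m
  have hbdd := bddAbove_truncatedMaximal φ 0 m
  have hX : ∫⁻ x in Ico (0 : ℝ) 1, ENNReal.ofReal (truncatedMaximal φ 0 m x) ^ p =
      ENNReal.ofReal (∫ x in Ico (0 : ℝ) 1, truncatedMaximal φ 0 m x ^ p) := by
    rw [ofReal_integral_eq_lintegral_ofReal (integrableOn_rpow_of_bddAbove measure_Ico_lt_top.ne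
      measurableSet_Ico hu hu0 hbdd (by linarith))
      (Filter.Eventually.of_forall fun x => Real.rpow_nonneg (hu0 x) p)]
    exact lintegral_congr fun x => ENNReal.ofReal_rpow_of_nonneg (hu0 x) (by linarith)
  have hR : ∫⁻ x in Ico (0 : ℝ) 1,
        ENNReal.ofReal (φ x) * ENNReal.ofReal (truncatedMaximal φ 0 m x) ^ (p - 1) =
      ENNReal.ofReal (∫ x in Ico (0 : ℝ) 1, φ x * truncatedMaximal φ 0 m x ^ (p - 1)) := by
    rw [ofReal_integral_eq_lintegral_ofReal (IntegrableOn.mul_rpow_of_bddAbove hint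
      measurableSet_Ico hu hu0 hbdd (by linarith))
      (Filter.Eventually.of_forall fun x => mul_nonneg (hφ x) (Real.rpow_nonneg (hu0 x) _))]
    exact lintegral_congr fun x => by
      rw [ENNReal.ofReal_rpow_of_nonneg (hu0 x) (by linarith), ENNReal.ofReal_mul (hφ x)]
  have hf : 0 ≤ ∫ x in Ico (0 : ℝ) 1, φ x := setIntegral_nonneg measurableSet_Ico fun x _ => hφ x
  refine ⟨hX ▸ ENNReal.ofReal_ne_top, ?_⟩
  rw [hX, hR, ← ENNReal.ofReal_mul (by linarith), ← ENNReal.ofReal_mul (by linarith),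
    ← ENNReal.ofReal_add (mul_nonneg (by linarith) (setIntegral_nonneg measurableSet_Ico
      fun x _ => Real.rpow_nonneg (hu0 x) p)) (Real.rpow_nonneg hf p)]
  exact ENNReal.ofReal_le_ofReal (truncatedMaximal_inequality hp hφ hint m)

lemma lintegral_eDyadicMaximal_inequality (hp : 1 < p) (hφ : ∀ x, 0 ≤ φ x)
    (hmem : MemLp φ (ENNReal.ofReal p) (volume.restrict (Ico (0 : ℝ) 1))) :
    ∫⁻ x in Ico (0 : ℝ) 1, eDyadicMaximal φ x ^ p ≠ ∞ ∧
      ∫⁻ x in Ico (0 : ℝ) 1, ENNReal.ofReal (φ x) * eDyadicMaximal φ x ^ (p - 1) ≠ ∞ ∧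
      ENNReal.ofReal (p - 1) * (∫⁻ x in Ico (0 : ℝ) 1, eDyadicMaximal φ x ^ p) +
          ENNReal.ofReal ((∫ x in Ico (0 : ℝ) 1, φ x) ^ p) ≤
        ENNReal.ofReal p *
          ∫⁻ x in Ico (0 : ℝ) 1, ENNReal.ofReal (φ x) * eDyadicMaximal φ x ^ (p - 1) := by
  have hp0 : 0 < p := by linarith
  have hint : IntegrableOn φ (Ico 0 1) := hmem.integrable (ENNReal.one_le_ofReal.2 hp.le)
  have hA : ∫⁻ x in Ico (0 : ℝ) 1, ENNReal.ofReal (φ x) ^ p ≠ ∞ := by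
    have h := (eLpNorm_lt_top_iff_lintegral_rpow_enorm_lt_top (by simpa using hp0)
      ENNReal.ofReal_ne_top).1 hmem.2
    simpa [Real.enorm_of_nonneg (hφ _), ENNReal.toReal_ofReal hp0.le] using h.ne
  rw [funext (eDyadicMaximal_eq_iSup_truncatedMaximal φ)]
  exact lintegral_iSup_rpow_inequality hp hmem.1.aemeasurable.ennreal_ofReal hA
    (fun m => (measurable_truncatedMaximal φ 0 m).ennreal_ofReal)
    (fun i j hij x => ENNReal.ofReal_le_ofReal (monotone_truncatedMaximal φ 0 hij x))
    (fun m => (lintegral_truncatedMaximal_inequality hp hφ hint m).1)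
    (fun m => (lintegral_truncatedMaximal_inequality hp hφ hint m).2)

end MainInequality

end

theorem stmt5 (p : ℝ) (hp : 1 < p)
    (φ : ℝ → ℝ) (hφ : ∀ x, 0 ≤ φ x)
    (hmem : MemLp φ (ENNReal.ofReal p) (volume.restrict (Ico (0 : ℝ) 1)))
    (f : ℝ) (hf : f = ∫ x in Ico (0 : ℝ) 1, φ x) :
    (∫ x in Ico (0 : ℝ) 1, dyadicMaximal φ x ^ p) ≤
      -(1 / (p - 1)) * f ^ p
        + p / (p - 1) * (∫ x in Ico (0 : ℝ) 1, φ x * dyadicMaximal φ x ^ (p - 1)) := by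
  obtain ⟨hX, hR, hineq⟩ := lintegral_eDyadicMaximal_inequality hp hφ hmem
  have hfin : ∀ᵐ x ∂volume.restrict (Ico (0 : ℝ) 1), eDyadicMaximal φ x ≠ ∞ :=
    (ae_lt_top ((measurable_eDyadicMaximal φ).pow_const p) hX).mono fun x hx =>
      ((ENNReal.rpow_lt_top_iff_of_pos (by linarith)).1 hx).ne
  have hM : dyadicMaximal φ =ᵐ[volume.restrict (Ico (0 : ℝ) 1)]
      fun x => (eDyadicMaximal φ x).toReal :=
    (ae_restrict_mem measurableSet_Ico).mono fun x hx => dyadicMaximal_eq_toReal hx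
  have hmeas := measurable_eDyadicMaximal φ
  rw [integral_congr_ae (hM.mono fun x hx => congrArg (· ^ p) hx),
    integral_congr_ae (hM.mono fun x hx => congrArg (fun y => φ x * y ^ (p - 1)) hx),
    integral_toReal_rpow hmeas.aemeasurable hfin (by linarith),
    integral_mul_toReal_rpow hmem.1.aemeasurable hφ hmeas.aemeasurable hfin (by linarith), hf]
  exact toReal_le_of_ofReal_mul_add_le hp hR
    (Real.rpow_nonneg (setIntegral_nonneg measurableSet_Ico fun x _ => hφ x) p) hineq
end

section
/- Let q > 1 and τ ∈ (0,1] be fixed. Then for every α with 0 < α < 1 the equation −(z − α)^q + (1 − α)^{q−1} z^q = τ α (1 − α)^{q−1} has a unique solution z = z(α, τ) ∈ [1, ∞); moreover, for any function z : (0,1) → [1,∞) assigning to each α this unique solution, z(α, τ) → ω_q(τ) as α → 0⁺. -/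
/-!
Write `Φ_α(z) = -(z - α)^q + (1 - α)^(q-1) z^q`. For `0 < α < 1` the map `Φ_α` is strictly
decreasing on `[1, ∞)`, since `(1 - α) z < z - α` for `z > 1`; it equals `α (1 - α)^(q-1)` at
`z = 1` and becomes nonpositive, so the equation `Φ_α(z) = τ α (1 - α)^(q-1)` has exactly one
root. Since `Φ_0 = 0` and `∂_α Φ_α(u)` at `α = 0` is `H_q(u)`, dividing the equation by `α`
gives decreasing functions `Φ_α / α` converging pointwise to the strictly decreasing `H_q`, with
right-hand sides `τ (1 - α)^(q-1) → τ`; hence the roots converge to the root `ω_q(τ)` of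
`H_q = τ`.
-/

open Set Filter

/-- `H_r(z) = r z^(r-1) - (r-1) z^r`. -/
noncomputable def Hfun (r z : ℝ) : ℝ := r * z ^ (r - 1) - (r - 1) * z ^ r

/-- `ω_r : [0,1] → [1, r/(r-1)]`, the inverse of `H_r` on `[1, r/(r-1)]`. -/
noncomputable def omegaFun (r t : ℝ) : ℝ :=
  Function.invFunOn (Hfun r) (Icc 1 (r / (r - 1))) t

open Topology

theorem tendsto_roots_of_antitoneOn {ι α β : Type*} {l : Filter ι}
    [LinearOrder α] [TopologicalSpace α] [OrderTopology α]
    [LinearOrder β] [TopologicalSpace β] [OrderClosedTopology β]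
    {g : ι → α → β} {G : α → β} {z : ι → α} {c : ι → β} {a ω : α} {t : β}
    (hg : ∀ᶠ i in l, AntitoneOn (g i) (Ici a)) (hz : ∀ᶠ i in l, a ≤ z i ∧ g i (z i) = c i)
    (hc : Tendsto c l (𝓝 t)) (hG : ∀ u, a ≤ u → Tendsto (fun i => g i u) l (𝓝 (G u)))
    (hGanti : StrictAntiOn G (Ici a)) (hω : a ≤ ω) (hGω : G ω = t) :
    Tendsto z l (𝓝 ω) := by
  rw [tendsto_order]
  constructor
  · intro b hb
    rcases lt_or_ge b a with hba | hab
    · filter_upwards [hz] with i hi using hba.trans_le hi.1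
    have hGb : t < G b := hGω ▸ hGanti hab hω hb
    filter_upwards [hg, hz, hc.eventually_lt (hG b hab) hGb] with i hgi ⟨hzi, hgz⟩ hlt
    by_contra! hle
    exact (hgz ▸ hgi hzi hab hle).not_gt hlt
  · intro b hb
    have hab : a ≤ b := hω.trans hb.le
    have hGb : G b < t := hGω ▸ hGanti hω hab hb
    filter_upwards [hg, hz, (hG b hab).eventually_lt hc hGb] with i hgi ⟨hzi, hgz⟩ hlt
    by_contra! hle
    exact (hgz ▸ hgi hab hzi hle).not_gt hlt

section
variable {q : ℝ}

theorem continuous_Hfun (hq : 1 ≤ q) : Continuous (Hfun q) := by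
  unfold Hfun
  have := Real.continuous_rpow_const (q := q - 1) (by linarith)
  have := Real.continuous_rpow_const (q := q) (by linarith)
  fun_prop

theorem Hfun_one : Hfun q 1 = 1 := by simp [Hfun]

theorem Hfun_div_sub_one (hq : 1 < q) : Hfun q (q / (q - 1)) = 0 := by
  have hq1 : q - 1 ≠ 0 := by linarith
  have hpos : 0 < q / (q - 1) := div_pos (by linarith) (by linarith)
  rw [Hfun, Real.rpow_sub_one hpos.ne']
  field_simp
  ring

theorem strictAntiOn_Hfun (hq : 1 < q) : StrictAntiOn (Hfun q) (Ici 1) := by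
  refine strictAntiOn_of_deriv_neg (convex_Ici 1) (continuous_Hfun hq.le).continuousOn
    fun z hz => ?_
  rw [interior_Ici, mem_Ioi] at hz
  have hz0 : z ≠ 0 := by positivity
  have hD : HasDerivAt (Hfun q)
      (q * ((q - 1) * z ^ (q - 1 - 1)) - (q - 1) * (q * z ^ (q - 1))) z :=
    ((Real.hasDerivAt_rpow_const (Or.inl hz0)).const_mul q).sub
      ((Real.hasDerivAt_rpow_const (Or.inl hz0)).const_mul (q - 1))
  have hlt : z ^ (q - 1 - 1) < z ^ (q - 1) := Real.rpow_lt_rpow_of_exponent_lt hz (by linarith)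
  rw [hD.deriv]
  nlinarith [mul_lt_mul_of_pos_left hlt (by nlinarith : 0 < q * (q - 1))]

theorem surjOn_Hfun (hq : 1 < q) : SurjOn (Hfun q) (Icc 1 (q / (q - 1))) (Icc 0 1) := by
  have hle : 1 ≤ q / (q - 1) := by rw [le_div_iff₀ (by linarith)]; linarith
  have h := intermediate_value_Icc' hle (continuous_Hfun hq.le).continuousOn
  rwa [Hfun_one, Hfun_div_sub_one hq] at h

theorem omegaFun_mem_Icc (hq : 1 < q) {t : ℝ} (ht : t ∈ Icc 0 1) :
    omegaFun q t ∈ Icc 1 (q / (q - 1)) :=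
  Function.invFunOn_mem (surjOn_Hfun hq ht)

theorem Hfun_omegaFun (hq : 1 < q) {t : ℝ} (ht : t ∈ Icc 0 1) : Hfun q (omegaFun q t) = t :=
  Function.invFunOn_eq (surjOn_Hfun hq ht)

end

noncomputable def Phi (q α z : ℝ) : ℝ := -(z - α) ^ q + (1 - α) ^ (q - 1) * z ^ q

section
variable {q : ℝ}

theorem continuous_Phi (hq : 0 ≤ q) (α : ℝ) : Continuous (Phi q α) := by
  unfold Phi
  have := Real.continuous_rpow_const hq
  fun_prop

theorem Phi_one {α : ℝ} (hα : α < 1) : Phi q α 1 = α * (1 - α) ^ (q - 1) := by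
  have h1α : 1 - α ≠ 0 := by linarith
  rw [Phi, Real.one_rpow, Real.rpow_sub_one h1α]
  field_simp
  ring

theorem strictAntiOn_Phi (hq : 1 < q) {α : ℝ} (hα : α ∈ Ioo 0 1) :
    StrictAntiOn (Phi q α) (Ici 1) := by
  obtain ⟨hα0, hα1⟩ := hα
  refine strictAntiOn_of_deriv_neg (convex_Ici 1) (continuous_Phi (by linarith) α).continuousOn
    fun z hz => ?_
  rw [interior_Ici, mem_Ioi] at hz
  have hD : HasDerivAt (Phi q α)
      (-(1 * q * (z - α) ^ (q - 1)) + (1 - α) ^ (q - 1) * (1 * q * z ^ (q - 1))) z :=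
    (((hasDerivAt_id z).sub_const α).rpow_const (Or.inr hq.le)).neg.add
      (((hasDerivAt_id z).rpow_const (Or.inr hq.le)).const_mul _)
  -- `(1 - α) z < z - α` exactly because `z > 1`
  have hlt : (1 - α) ^ (q - 1) * z ^ (q - 1) < (z - α) ^ (q - 1) := by
    rw [← Real.mul_rpow (by linarith) (by linarith)]
    exact Real.rpow_lt_rpow (by nlinarith) (by nlinarith) (by linarith)
  rw [hD.deriv]
  nlinarith [mul_lt_mul_of_pos_left hlt (by linarith : 0 < q)]

theorem exists_Phi_nonpos (hq : 1 < q) {α : ℝ} (hα : α ∈ Ioo 0 1) :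
    ∃ M, 1 ≤ M ∧ Phi q α M ≤ 0 := by
  obtain ⟨hα0, hα1⟩ := hα
  have hq0 : 0 < q := by linarith
  -- `Phi q α M ≤ 0` iff `X M ≤ M - α`, where `X ^ q = (1 - α) ^ (q - 1)` and `X < 1`
  set X := (1 - α) ^ ((q - 1) / q) with hX
  have hX0 : 0 ≤ X := by positivity
  have hX1 : X < 1 := Real.rpow_lt_one (by linarith) (by linarith) (by positivity)
  have hXq : X ^ q = (1 - α) ^ (q - 1) := by
    rw [hX, ← Real.rpow_mul (by linarith), div_mul_cancel₀ _ hq0.ne']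
  set M := max 1 (α / (1 - X))
  have hM : α / (1 - X) ≤ M := le_max_right _ _
  rw [div_le_iff₀ (by linarith)] at hM
  have hXM : (X * M) ^ q ≤ (M - α) ^ q :=
    Real.rpow_le_rpow (by positivity) (by linarith) hq0.le
  rw [Real.mul_rpow hX0 (by positivity), hXq] at hXM
  exact ⟨M, le_max_left _ _, by rw [Phi]; linarith⟩

theorem exists_Phi_eq (hq : 1 < q) {α : ℝ} (hα : α ∈ Ioo 0 1) {c : ℝ}
    (hc : c ∈ Icc 0 (Phi q α 1)) : ∃ z, 1 ≤ z ∧ Phi q α z = c := by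
  obtain ⟨M, hM, hPhiM⟩ := exists_Phi_nonpos hq hα
  obtain ⟨z, hz, hzc⟩ := intermediate_value_Icc' hM (continuous_Phi (by linarith) α).continuousOn
    ⟨hPhiM.trans hc.1, hc.2⟩
  exact ⟨z, hz.1, hzc⟩

theorem hasDerivAt_Phi_zero (hq : 1 ≤ q) (u : ℝ) :
    HasDerivAt (fun α => Phi q α u) (Hfun q u) 0 := by
  have hD := (((hasDerivAt_id (0 : ℝ)).const_sub u).rpow_const (Or.inr hq)).neg.add
    ((((hasDerivAt_id (0 : ℝ)).const_sub 1).rpow_const (p := q - 1) (Or.inl (by simp))).mul_const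
      (u ^ q))
  refine hD.congr_deriv ?_
  simp only [neg_mul, one_mul, id_eq, sub_zero, neg_neg, Real.one_rpow, mul_one, Hfun]
  ring

theorem tendsto_Phi_div (hq : 1 ≤ q) (u : ℝ) :
    Tendsto (fun α => Phi q α u / α) (𝓝[≠] 0) (𝓝 (Hfun q u)) := by
  have h := hasDerivAt_iff_tendsto_slope_zero.1 (hasDerivAt_Phi_zero hq u)
  simpa [Phi, div_eq_inv_mul] using h

end

theorem stmt11 (q τ : ℝ) (hq : 1 < q) (hτ : τ ∈ Ioc (0 : ℝ) 1) :
    (∀ α ∈ Ioo (0 : ℝ) 1, ∃! z : ℝ, 1 ≤ z ∧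
        -(z - α) ^ q + (1 - α) ^ (q - 1) * z ^ q = τ * α * (1 - α) ^ (q - 1)) ∧
    ∀ z : ℝ → ℝ,
      (∀ α ∈ Ioo (0 : ℝ) 1, 1 ≤ z α ∧
        -(z α - α) ^ q + (1 - α) ^ (q - 1) * z α ^ q = τ * α * (1 - α) ^ (q - 1)) →
      Tendsto z (nhdsWithin 0 (Ioo (0 : ℝ) 1)) (nhds (omegaFun q τ)) := by
  refine ⟨fun α hα => ?_, fun z hz => ?_⟩
  · have hτα : τ * α * (1 - α) ^ (q - 1) ∈ Icc 0 (Phi q α 1) := by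
      rw [Phi_one hα.2]
      have h0 : 0 ≤ (1 - α) ^ (q - 1) := Real.rpow_nonneg (by linarith [hα.2]) _
      exact ⟨mul_nonneg (mul_nonneg hτ.1.le hα.1.le) h0,
        mul_le_mul_of_nonneg_right (mul_le_of_le_one_left hα.1.le hτ.2) h0⟩
    obtain ⟨z, hz1, hz⟩ := exists_Phi_eq hq hα hτα
    exact ⟨z, ⟨hz1, hz⟩, fun y hy => (strictAntiOn_Phi hq hα).injOn hy.1 hz1 (hy.2.trans hz.symm)⟩
  · have hτ' : τ ∈ Icc 0 1 := Ioc_subset_Icc_self hτ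
    have hIoo : ∀ᶠ α in 𝓝[Ioo 0 1] 0, α ∈ Ioo (0 : ℝ) 1 := self_mem_nhdsWithin
    have hc : Tendsto (fun α : ℝ => τ * (1 - α) ^ (q - 1)) (𝓝[Ioo 0 1] 0) (𝓝 τ) := by
      have : ContinuousAt (fun α : ℝ => τ * (1 - α) ^ (q - 1)) 0 := by
        fun_prop (disch := norm_num)
      simpa using this.tendsto.mono_left nhdsWithin_le_nhds
    refine tendsto_roots_of_antitoneOn (g := fun α u => Phi q α u / α) ?_ ?_ hc
      (fun u _ => (tendsto_Phi_div hq.le u).mono_left (nhdsWithin_mono _ fun α hα => hα.1.ne'))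
      (strictAntiOn_Hfun hq) (omegaFun_mem_Icc hq hτ').1 (Hfun_omegaFun hq hτ')
    · filter_upwards [hIoo] with α hα x hx y hy hxy
      exact div_le_div_of_nonneg_right ((strictAntiOn_Phi hq hα).antitoneOn hx hy hxy) hα.1.le
    · filter_upwards [hIoo] with α hα
      obtain ⟨hz1, hzeq⟩ := hz α hα
      refine ⟨hz1, ?_⟩
      rw [Phi, hzeq]
      field_simp [hα.1.ne']
end

section
/- Let 1 < q < p and let f, A, F be real numbers with 0 < f, f^q ≤ A, and A^{p/q} ≤ F. Then the quantity k = (p f^{p−q} A − (p−q) f^p)/F satisfies 0 < k ≤ q. -/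
/-! With `x = f ^ q` and `t = p / q ≥ 1`, the numerator equals `q (t x^(t-1) A - (t-1) x^t)`,
which is `q` times the tangent line of the convex map `y ↦ y ^ t` at `x`, evaluated at `A`.
Convexity bounds it by `q A^t ≤ q F`, and since `A ≥ x` it is at least `q x^t > 0`. -/

open Real

theorem Real.mul_rpow_sub_one_mul_sub_le_rpow {x y t : ℝ} (hx : 0 < x) (hy : 0 ≤ y) (ht : 1 ≤ t) :
    t * x ^ (t - 1) * y - (t - 1) * x ^ t ≤ y ^ t := by
  have hxt : 0 < x ^ t := rpow_pos_of_pos hx t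
  have hbernoulli : 1 + t * (y / x - 1) ≤ (y / x) ^ t := by
    simpa using one_add_mul_self_le_rpow_one_add (s := y / x - 1) (by linarith [div_nonneg hy hx.le]) ht
  rw [div_rpow hy hx.le, le_div_iff₀ hxt] at hbernoulli
  calc t * x ^ (t - 1) * y - (t - 1) * x ^ t = (1 + t * (y / x - 1)) * x ^ t := by
        rw [rpow_sub_one hx.ne']; field_simp; ring
    _ ≤ y ^ t := hbernoulli

theorem Real.mul_rpow_sub_mul_sub_le_mul_rpow_div {p q f A : ℝ} (hq : 0 < q) (hqp : q ≤ p)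
    (hf : 0 < f) (hA : 0 ≤ A) :
    p * f ^ (p - q) * A - (p - q) * f ^ p ≤ q * A ^ (p / q) := by
  have hpow (s : ℝ) : (f ^ q) ^ s = f ^ (q * s) := (rpow_mul hf.le q s).symm
  have htangent := mul_rpow_sub_one_mul_sub_le_rpow (rpow_pos_of_pos hf q) hA
    ((one_le_div hq).2 hqp)
  rw [hpow, hpow, mul_sub, mul_div_cancel₀ _ hq.ne', mul_one] at htangent
  calc p * f ^ (p - q) * A - (p - q) * f ^ p
      = q * (p / q * f ^ (p - q) * A - (p / q - 1) * f ^ p) := by field_simp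
    _ ≤ q * A ^ (p / q) := mul_le_mul_of_nonneg_left htangent hq.le

theorem Real.mul_rpow_sub_mul_sub_pos {p q f A : ℝ} (hq : 0 < q) (hqp : q ≤ p) (hf : 0 < f)
    (hA : f ^ q ≤ A) :
    0 < p * f ^ (p - q) * A - (p - q) * f ^ p := by
  have hfp : f ^ (p - q) * f ^ q = f ^ p := by rw [← rpow_add hf, sub_add_cancel]
  have hle : p * f ^ p ≤ p * f ^ (p - q) * A := by
    rw [← hfp, ← mul_assoc]
    exact mul_le_mul_of_nonneg_left hA (mul_nonneg (by linarith) (rpow_nonneg hf.le _))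
  nlinarith [rpow_pos_of_pos hf p]

theorem stmt13 (p q f A F : ℝ) (hq : 1 < q) (hqp : q < p) (hf : 0 < f)
    (hA : f ^ q ≤ A) (hF : A ^ (p / q) ≤ F) :
    0 < (p * f ^ (p - q) * A - (p - q) * f ^ p) / F ∧
      (p * f ^ (p - q) * A - (p - q) * f ^ p) / F ≤ q := by
  have hq0 : 0 < q := by linarith
  have hA0 : 0 < A := (rpow_pos_of_pos hf q).trans_le hA
  have hF0 : 0 < F := (rpow_pos_of_pos hA0 _).trans_le hF
  refine ⟨div_pos (mul_rpow_sub_mul_sub_pos hq0 hqp.le hf hA) hF0, ?_⟩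
  rw [div_le_iff₀ hF0]
  calc p * f ^ (p - q) * A - (p - q) * f ^ p ≤ q * A ^ (p / q) :=
        mul_rpow_sub_mul_sub_le_mul_rpow_div hq0 hqp.le hf hA0.le
    _ ≤ q * F := mul_le_mul_of_nonneg_left hF hq0.le
end

section
/- Let 1 < q < p and define K(β) = (q−1)β/(β+1)^q + ((p−q)/p)·(β+1)^{−(q−1)} for β ∈ [0, 1/(p−1)). Then K is strictly increasing on (0, 1/(p−1)) (its derivative equals (q−1)q(1 − β(p−1)) / (p(β+1)^{q+1}) > 0 there), and consequently K(β) > (p−q)/p for every β ∈ (0, 1/(p−1)). -/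
open Set

noncomputable def kFunction (p q β : ℝ) : ℝ :=
  (q - 1) * β / (β + 1) ^ q + (p - q) / p * (β + 1) ^ (-(q - 1))

section

variable {p q : ℝ}

lemma kFunction_zero : kFunction p q 0 = (p - q) / p := by
  simp [kFunction]

lemma hasDerivAt_kFunction (hp : p ≠ 0) {β : ℝ} (hβ : -1 < β) :
    HasDerivAt (kFunction p q)
      ((q - 1) * q * (1 - β * (p - 1)) / (p * (β + 1) ^ (q + 1))) β := by
  have ht : 0 < β + 1 := by linarith
  have hshift : HasDerivAt (fun x : ℝ => x + 1) 1 β := (hasDerivAt_id β).add_const 1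
  have hlin : HasDerivAt (fun x : ℝ => (q - 1) * x) (q - 1) β := by
    simpa using (hasDerivAt_id β).const_mul (q - 1)
  have hquot := hlin.div (hshift.rpow_const (p := q) (Or.inl ht.ne'))
    (Real.rpow_pos_of_pos ht q).ne'
  have hpow := (hshift.rpow_const (p := -(q - 1)) (Or.inl ht.ne')).const_mul ((p - q) / p)
  refine (hquot.add hpow).congr_deriv ?_
  -- Every power of `β + 1` occurring is `s = (β + 1) ^ (q - 1)` times an integer power.
  obtain ⟨s, hs, hsq⟩ : ∃ s, 0 < s ∧ (β + 1) ^ (q - 1) = s :=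
    ⟨_, Real.rpow_pos_of_pos ht _, rfl⟩
  have e1 : (β + 1) ^ q = s * (β + 1) := by
    rw [← hsq, ← Real.rpow_add_one ht.ne']; ring_nf
  have e2 : (β + 1) ^ (q + 1) = s * (β + 1) * (β + 1) := by
    rw [← e1, ← Real.rpow_add_one ht.ne']
  have e3 : (β + 1) ^ (-(q - 1) - 1) = (s * (β + 1))⁻¹ := by
    rw [← e1, ← Real.rpow_neg ht.le]; ring_nf
  rw [e1, e2, e3, hsq]
  field_simp
  ring

lemma kFunction_deriv_pos (hq : 1 < q) (hp : 1 < p) {β : ℝ} (hβ : β ∈ Ico 0 (1 / (p - 1))) :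
    0 < (q - 1) * q * (1 - β * (p - 1)) / (p * (β + 1) ^ (q + 1)) := by
  have hβp : β * (p - 1) < 1 := (lt_div_iff₀ (by linarith)).mp hβ.2
  have := Real.rpow_pos_of_pos (show 0 < β + 1 by linarith [hβ.1]) (q + 1)
  apply div_pos <;> apply mul_pos <;> nlinarith

lemma strictMonoOn_kFunction (hq : 1 < q) (hp : 1 < p) :
    StrictMonoOn (kFunction p q) (Ico 0 (1 / (p - 1))) := by
  refine strictMonoOn_of_deriv_pos (convex_Ico _ _) (fun β hβ => ?_) (fun β hβ => ?_)
  · exact (hasDerivAt_kFunction (by linarith) (by linarith [hβ.1])).continuousAt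
      |>.continuousWithinAt
  · rw [interior_Ico] at hβ
    rw [(hasDerivAt_kFunction (by linarith) (by linarith [hβ.1])).deriv]
    exact kFunction_deriv_pos hq hp (Ioo_subset_Ico_self hβ)

end

theorem stmt17 (p q : ℝ) (hq : 1 < q) (hqp : q < p) (K : ℝ → ℝ)
    (hK : ∀ β, K β = (q - 1) * β / (β + 1) ^ q + (p - q) / p * (β + 1) ^ (-(q - 1))) :
    StrictMonoOn K (Ioo 0 (1 / (p - 1))) ∧
    (∀ β ∈ Ioo (0 : ℝ) (1 / (p - 1)),
      HasDerivAt K ((q - 1) * q * (1 - β * (p - 1)) / (p * (β + 1) ^ (q + 1))) β ∧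
        0 < (q - 1) * q * (1 - β * (p - 1)) / (p * (β + 1) ^ (q + 1))) ∧
    ∀ β ∈ Ioo (0 : ℝ) (1 / (p - 1)), (p - q) / p < K β := by
  have hp : 1 < p := hq.trans hqp
  obtain rfl : K = kFunction p q := funext hK
  have hmono := strictMonoOn_kFunction hq hp
  refine ⟨hmono.mono Ioo_subset_Ico_self, fun β hβ => ⟨?_, ?_⟩, fun β hβ => ?_⟩
  · exact hasDerivAt_kFunction (by linarith) (by linarith [hβ.1])
  · exact kFunction_deriv_pos hq hp (Ioo_subset_Ico_self hβ)
  · have h0 : (0 : ℝ) ∈ Ico 0 (1 / (p - 1)) := ⟨le_rfl, one_div_pos.mpr (by linarith)⟩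
    simpa [kFunction_zero] using hmono h0 (Ioo_subset_Ico_self hβ) hβ.1
end

section
/- Let 1 < q < p, let β ∈ (0, 1/(p−1)), and set A_β = (q−1)β/(β+1)^q + ((p−q)/p)·(β+1)^{−(q−1)}. Then the function h_β(y) = y^{p−q} − A_β y^p is strictly decreasing on (1, ∞). -/
/-! Since `y ^ (p - q - 1) < y ^ (p - 1)` for `y > 1`, the derivative
`(p - q) y ^ (p - q - 1) - A_β p y ^ (p - 1)` of `h_β` is negative as soon as `A_β ≥ (p - q) / p`.
Multiplying by `(β + 1) ^ q`, the bound `A_β > (p - q) / p` becomes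
`(p - q) / p · (β + 1) ^ q < (q - 1) β + (p - q) / p · (β + 1)`. Writing `β + 1` as the convex
combination of `1` and `p / (p - 1)` with weight `t = β (p - 1) ∈ (0, 1)`, convexity of `u ↦ u ^ q`
reduces this to the endpoint `p / (p - 1)`, where it is Bernoulli's inequality
`1 - q / p < (1 - 1 / p) ^ q`. -/

open Set

theorem one_sub_add_mul_rpow_le {q t x : ℝ} (hq : 1 ≤ q) (ht₀ : 0 ≤ t) (ht₁ : t ≤ 1)
    (hx : 0 ≤ x) : (1 - t + t * x) ^ q ≤ 1 - t + t * x ^ q := by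
  have h := (convexOn_rpow hq).2 (mem_Ici.2 zero_le_one) (mem_Ici.2 hx) (sub_nonneg.2 ht₁) ht₀
    (sub_add_cancel 1 t)
  simpa only [smul_eq_mul, mul_one, Real.one_rpow] using h

theorem sub_div_mul_div_sub_one_rpow_lt_one {p q : ℝ} (hp : 1 < p) (hq : 1 < q) :
    (p - q) / p * (p / (p - 1)) ^ q < 1 := by
  have hp₀ : 0 < p := by linarith
  have hK : 0 < (p / (p - 1)) ^ q := Real.rpow_pos_of_pos (div_pos hp₀ (by linarith)) q
  have hbernoulli : 1 + q * -(1 / p) < (1 + -(1 / p)) ^ q :=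
    one_add_mul_self_lt_rpow_one_add (by rw [neg_le_neg_iff, div_le_one hp₀]; exact hp.le)
      (neg_ne_zero.2 (by positivity)) hq
  have hinv : (1 + -(1 / p)) ^ q = ((p / (p - 1)) ^ q)⁻¹ := by
    rw [← Real.inv_rpow (by positivity), inv_div]
    congr 1
    field_simp
    ring
  calc (p - q) / p * (p / (p - 1)) ^ q = (1 + q * -(1 / p)) * (p / (p - 1)) ^ q := by
        congr 1
        field_simp
        ring
    _ < ((p / (p - 1)) ^ q)⁻¹ * (p / (p - 1)) ^ q := by
        rw [← hinv]
        gcongr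
    _ = 1 := inv_mul_cancel₀ hK.ne'

/-- The coefficient `A_β`. -/
noncomputable def coeffA (p q β : ℝ) : ℝ :=
  (q - 1) * β / (β + 1) ^ q + (p - q) / p * (β + 1) ^ (-(q - 1))

theorem sub_div_lt_coeffA {p q β : ℝ} (hq : 1 < q) (hqp : q < p) (hβ₀ : 0 < β)
    (hβ₁ : β < 1 / (p - 1)) : (p - q) / p < coeffA p q β := by
  have hp : 1 < p := hq.trans hqp
  have hp₀ : 0 < p := by linarith
  have hp₁ : 0 < p - 1 := by linarith
  have ht₀ : 0 < β * (p - 1) := mul_pos hβ₀ hp₁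
  have ht₁ : β * (p - 1) < 1 := by rwa [lt_div_iff₀ hp₁] at hβ₁
  have hu : 0 < (β + 1) ^ q := Real.rpow_pos_of_pos (by linarith) q
  have hchord : (β + 1) ^ q ≤ 1 - β * (p - 1) + β * (p - 1) * (p / (p - 1)) ^ q := by
    have h := one_sub_add_mul_rpow_le hq.le ht₀.le ht₁.le (div_pos hp₀ hp₁).le
    rwa [show 1 - β * (p - 1) + β * (p - 1) * (p / (p - 1)) = β + 1 by field_simp; ring] at h
  have hcleared : (p - q) / p * (β + 1) ^ q < (q - 1) * β + (p - q) / p * (β + 1) :=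
    calc (p - q) / p * (β + 1) ^ q
        ≤ (p - q) / p * (1 - β * (p - 1) + β * (p - 1) * (p / (p - 1)) ^ q) := by gcongr
      _ = (p - q) / p * (1 - β * (p - 1))
            + β * (p - 1) * ((p - q) / p * (p / (p - 1)) ^ q) := by ring
      _ < (p - q) / p * (1 - β * (p - 1)) + β * (p - 1) * 1 := by
          gcongr
          exact sub_div_mul_div_sub_one_rpow_lt_one hp hq
      _ = (q - 1) * β + (p - q) / p * (β + 1) := by field_simp; ring
  have hneg : (β + 1) ^ (-(q - 1)) = (β + 1) / (β + 1) ^ q := by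
    rw [neg_sub, Real.rpow_sub (by linarith), Real.rpow_one]
  rwa [coeffA, hneg, mul_div_assoc', ← add_div, lt_div_iff₀ hu]

theorem strictAntiOn_rpow_sub_mul_rpow_of_sub_div_le {p q A : ℝ} (hq : 0 < q) (hqp : q < p)
    (hA : (p - q) / p ≤ A) : StrictAntiOn (fun y : ℝ => y ^ (p - q) - A * y ^ p) (Ioi 1) := by
  have hp : 0 < p := hq.trans hqp
  have hderiv : ∀ y ∈ Ioi (1 : ℝ), HasDerivAt (fun y : ℝ => y ^ (p - q) - A * y ^ p)
      ((p - q) * y ^ (p - q - 1) - A * (p * y ^ (p - 1))) y := fun y hy =>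
    (Real.hasDerivAt_rpow_const (Or.inl (zero_lt_one.trans (mem_Ioi.1 hy)).ne')).sub
      ((Real.hasDerivAt_rpow_const (Or.inl (zero_lt_one.trans (mem_Ioi.1 hy)).ne')).const_mul A)
  refine strictAntiOn_of_hasDerivWithinAt_neg (convex_Ioi 1)
    (fun y hy => (hderiv y hy).continuousAt.continuousWithinAt)
    (fun y hy => (hderiv y (interior_subset hy)).hasDerivWithinAt) fun y hy => ?_
  rw [interior_Ioi] at hy
  have hAp : p - q ≤ A * p := (div_le_iff₀ hp).1 hA
  have hpow : y ^ (p - q - 1) < y ^ (p - 1) := Real.rpow_lt_rpow_of_exponent_lt hy (by linarith)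
  have hpos : 0 < y ^ (p - 1) := Real.rpow_pos_of_pos (zero_lt_one.trans hy) _
  rw [sub_neg]
  calc (p - q) * y ^ (p - q - 1) < (p - q) * y ^ (p - 1) := by gcongr
    _ ≤ A * p * y ^ (p - 1) := by gcongr
    _ = A * (p * y ^ (p - 1)) := by ring

theorem stmt18 (p q β : ℝ) (hq : 1 < q) (hqp : q < p)
    (hβ : β ∈ Ioo (0 : ℝ) (1 / (p - 1))) :
    StrictAntiOn (fun y : ℝ => y ^ (p - q) -
        ((q - 1) * β / (β + 1) ^ q + (p - q) / p * (β + 1) ^ (-(q - 1))) * y ^ p)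
      (Ioi 1) :=
  strictAntiOn_rpow_sub_mul_rpow_of_sub_div_le (by linarith) hqp (sub_div_lt_coeffA hq hqp hβ.1 hβ.2).le
end
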